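/- arXiv:2502.09229 — 3 statements merged into one kernel-verified Lean document; each statement's English description precedes it below -/
import Mathlib

section
/- Let κ > 0 and α < 1 − κ, and let f(λ) = λ^{−α} on (0,π). Then there exists a constant C = C(α, κ) > 0 such that for all n ∈ ℕ, sup_{h ∈ P_n} ( ∫_0^π λ^{−α−κ} h(λ) dλ / ∫_0^π λ^{−α} h(λ) dλ ) ≤ C n^{κ/(1 − α₊)}, where α₊ = max(α, 0). -/
/-!
Split the numerator at `δ = n ^ (-1 / (1 - α₊))`. Below `δ`, bound `h` by `n` and integrate
`λ ^ (-α - κ)` exactly: this gives a constant times `n ^ (κ / (1 - α₊)) * n ^ min α 0`. Above `δ`,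
`λ ^ (-κ) ≤ δ ^ (-κ) = n ^ (κ / (1 - α₊))`, so this piece is at most `n ^ (κ / (1 - α₊))` times
the denominator. Finally the denominator is at least a constant times `n ^ min α 0`, because
`h ≤ n` leaves at least half of the mass of `h` beyond `1 / (2n)`.
-/

open MeasureTheory Real Filter Topology
open scoped ENNReal

noncomputable section

/-- `P_n`: the class of probability densities on `(0, π)` bounded by `n`. -/
def MemPn (n : ℕ) (h : ℝ → ℝ) : Prop :=
  (∀ l ∈ Set.Ioo (0 : ℝ) π, 0 ≤ h l ∧ h l ≤ n) ∧
    (∫ l in Set.Ioo (0 : ℝ) π, h l) = 1 ∧ IntegrableOn h (Set.Ioo (0 : ℝ) π)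

open Set

theorem lintegral_Ioo_zero_rpow {s δ : ℝ} (hs : -1 < s) (hδ : 0 ≤ δ) :
    ∫⁻ l in Ioo 0 δ, ENNReal.ofReal (l ^ s) = ENNReal.ofReal (δ ^ (s + 1) / (s + 1)) := by
  have hint : IntegrableOn (fun l : ℝ => l ^ s) (Ioo 0 δ) := by
    have := intervalIntegral.intervalIntegrable_rpow' (a := 0) (b := δ) hs
    rw [intervalIntegrable_iff, uIoc_of_le hδ] at this
    exact this.mono_set Ioo_subset_Ioc_self
  rw [← ofReal_integral_eq_lintegral_ofReal hint
      (ae_restrict_of_forall_mem measurableSet_Ioo fun l hl => rpow_nonneg hl.1.le s),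
    ← integral_Ioc_eq_integral_Ioo, ← intervalIntegral.integral_of_le hδ,
    integral_rpow (Or.inl hs), zero_rpow (by linarith), sub_zero]

theorem lintegral_rpow_sub_mul_le {α κ b δ M : ℝ} {h : ℝ → ℝ} (hκ : 0 ≤ κ) (hακ : α + κ < 1)
    (hδ : 0 < δ) (hδb : δ ≤ b) (hh : ∀ l ∈ Ioo 0 b, 0 ≤ h l ∧ h l ≤ M) :
    ∫⁻ l in Ioo 0 b, ENNReal.ofReal (l ^ (-α - κ) * h l) ≤
      ENNReal.ofReal (M * δ ^ (1 - α - κ) / (1 - α - κ)) +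
        ENNReal.ofReal (δ ^ (-κ)) * ∫⁻ l in Ioo 0 b, ENNReal.ofReal (l ^ (-α) * h l) := by
  calc ∫⁻ l in Ioo 0 b, ENNReal.ofReal (l ^ (-α - κ) * h l)
      ≤ (∫⁻ l in Ioo 0 δ, ENNReal.ofReal (l ^ (-α - κ) * h l)) +
          ∫⁻ l in Ico δ b, ENNReal.ofReal (l ^ (-α - κ) * h l) := by
        rw [← Ioo_union_Ico_eq_Ioo hδ hδb]
        exact lintegral_union_le _ _ _
    _ ≤ (∫⁻ l in Ioo 0 δ, ENNReal.ofReal M * ENNReal.ofReal (l ^ (-α - κ))) +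
          ∫⁻ l in Ico δ b, ENNReal.ofReal (δ ^ (-κ)) * ENNReal.ofReal (l ^ (-α) * h l) := by
        gcongr ?_ + ?_
        · refine setLIntegral_mono' measurableSet_Ioo fun l hl => ?_
          rw [← ENNReal.ofReal_mul' (rpow_nonneg hl.1.le _), mul_comm M]
          exact ENNReal.ofReal_le_ofReal <| mul_le_mul_of_nonneg_left
            (hh l ⟨hl.1, hl.2.trans_le hδb⟩).2 (rpow_nonneg hl.1.le _)
        · refine setLIntegral_mono' measurableSet_Ico fun l hl => ?_
          have hl0 : 0 < l := hδ.trans_le hl.1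
          rw [← ENNReal.ofReal_mul (rpow_nonneg hδ.le _), sub_eq_add_neg, add_comm,
            rpow_add hl0, mul_assoc]
          exact ENNReal.ofReal_le_ofReal <| mul_le_mul_of_nonneg_right
            (rpow_le_rpow_of_nonpos hδ hl.1 (by linarith))
            (mul_nonneg (rpow_nonneg hl0.le _) (hh l ⟨hl0, hl.2⟩).1)
    _ ≤ _ := by
        rw [lintegral_const_mul' _ _ ENNReal.ofReal_ne_top,
          lintegral_const_mul' _ _ ENNReal.ofReal_ne_top,
          lintegral_Ioo_zero_rpow (by linarith) hδ.le,
          show -α - κ + 1 = 1 - α - κ by ring,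
          ← ENNReal.ofReal_mul' (div_nonneg (rpow_nonneg hδ.le _) (by linarith)), mul_div_assoc]
        gcongr

theorem two_pi_rpow_mul_rpow_min_le_rpow_neg {α n l : ℝ} (hn : 1 ≤ n) (hl : (2 * n)⁻¹ < l)
    (hlπ : l < π) : (2 * π) ^ (-|α|) * n ^ min α 0 ≤ l ^ (-α) := by
  have hl0 : 0 < l := lt_trans (by positivity) hl
  rcases le_or_gt 0 α with hα | hα
  · rw [abs_of_nonneg hα, min_eq_right hα, rpow_zero, mul_one]
    exact rpow_le_rpow_of_nonpos hl0 (by linarith [pi_pos]) (by linarith)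
  · rw [abs_of_neg hα, neg_neg, min_eq_left hα.le, ← mul_rpow (by positivity) (by positivity),
      ← neg_neg α, rpow_neg (by positivity), ← inv_rpow (by positivity), neg_neg]
    refine rpow_le_rpow (by positivity) (le_trans ?_ hl.le) (by linarith)
    gcongr
    linarith [pi_gt_three]

theorem one_sub_inv_one_sub_max_mul (α κ : ℝ) (hα : α < 1) :
    1 - (1 - max α 0)⁻¹ * (1 - α - κ) = κ / (1 - max α 0) + min α 0 := by
  rcases le_or_gt 0 α with h | h
  · rw [max_eq_left h, min_eq_right h]
    field_simp [show 1 - α ≠ 0 by linarith]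
    ring
  · rw [max_eq_right h.le, min_eq_left h.le]
    ring

theorem mul_rpow_neg_inv_rpow {α κ n : ℝ} (hn : 0 < n) (hα : α < 1) :
    n * (n ^ (-(1 - max α 0)⁻¹)) ^ (1 - α - κ) = n ^ (κ / (1 - max α 0)) * n ^ min α 0 := by
  calc n * (n ^ (-(1 - max α 0)⁻¹)) ^ (1 - α - κ)
      = n ^ (1 + -(1 - max α 0)⁻¹ * (1 - α - κ)) := by rw [rpow_add hn, rpow_one, rpow_mul hn.le]
    _ = n ^ (κ / (1 - max α 0)) * n ^ min α 0 := by
      rw [← rpow_add hn, ← one_sub_inv_one_sub_max_mul α κ hα, neg_mul, ← sub_eq_add_neg]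

namespace MemPn

variable {n : ℕ} {h : ℝ → ℝ}

theorem pos (hh : MemPn n h) : 0 < n := by
  refine Nat.pos_of_ne_zero fun hn => ?_
  have : ∫ l in Ioo 0 π, h l = 0 := setIntegral_eq_zero_of_forall_eq_zero fun l hl =>
    le_antisymm (by simpa [hn] using (hh.1 l hl).2) (hh.1 l hl).1
  linarith [hh.2.1]

theorem one_sub_mul_le_setIntegral_Ioo (hh : MemPn n h) {t : ℝ} (ht : 0 ≤ t) (htπ : t < π) :
    1 - n * t ≤ ∫ l in Ioo t π, h l := by
  have hsplit : ∫ l in Ioo 0 π, h l = (∫ l in Ioc 0 t, h l) + ∫ l in Ioo t π, h l := by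
    rw [← Ioc_union_Ioo_eq_Ioo ht htπ]
    exact setIntegral_union (Ioc_disjoint_Ioi_same.mono_right Ioo_subset_Ioi_self)
      measurableSet_Ioo
      (hh.2.2.mono_set (Ioc_subset_Ioo_right htπ)) (hh.2.2.mono_set (Ioo_subset_Ioo_left ht))
  have hsmall : ∫ l in Ioc 0 t, h l ≤ n * t := by
    calc ∫ l in Ioc 0 t, h l ≤ ∫ _ in Ioc 0 t, (n : ℝ) :=
          setIntegral_mono_on (hh.2.2.mono_set (Ioc_subset_Ioo_right htπ))
            (integrableOn_const (by simp)) measurableSet_Ioc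
            fun l hl => (hh.1 l (Ioc_subset_Ioo_right htπ hl)).2
      _ = n * t := by simp [ht, mul_comm]
  linarith [hh.2.1]

theorem le_lintegral_rpow_mul (hh : MemPn n h) (α : ℝ) :
    ENNReal.ofReal ((2 * π) ^ (-|α|) * n ^ min α 0 / 2) ≤
      ∫⁻ l in Ioo 0 π, ENNReal.ofReal (l ^ (-α) * h l) := by
  have hn : (1 : ℝ) ≤ n := Nat.one_le_cast.2 hh.pos
  set t : ℝ := (2 * n)⁻¹
  set m : ℝ := (2 * π) ^ (-|α|) * n ^ min α 0
  have ht : 0 ≤ t := by positivity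
  have htπ : t < π := by
    have : t ≤ 2⁻¹ := inv_anti₀ two_pos (by linarith)
    linarith [pi_gt_three]
  have hmass : 1 / 2 ≤ ∫ l in Ioo t π, h l := by
    have := hh.one_sub_mul_le_setIntegral_Ioo ht htπ
    rwa [show (n : ℝ) * t = 1 / 2 by simp only [t]; field_simp,
      show (1 : ℝ) - 1 / 2 = 1 / 2 by norm_num] at this
  have hnonneg : ∀ l ∈ Ioo t π, 0 ≤ h l := fun l hl => (hh.1 l (Ioo_subset_Ioo_left ht hl)).1
  calc ENNReal.ofReal (m / 2) = ENNReal.ofReal m * ENNReal.ofReal (1 / 2) := by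
        rw [← ENNReal.ofReal_mul (by positivity), div_eq_mul_one_div]
    _ ≤ ENNReal.ofReal m * ∫⁻ l in Ioo t π, ENNReal.ofReal (h l) := by
        rw [← ofReal_integral_eq_lintegral_ofReal (hh.2.2.mono_set (Ioo_subset_Ioo_left ht))
          (ae_restrict_of_forall_mem measurableSet_Ioo hnonneg)]
        exact mul_le_mul_right (ENNReal.ofReal_le_ofReal hmass) _
    _ = ∫⁻ l in Ioo t π, ENNReal.ofReal (m * h l) := by
        rw [← lintegral_const_mul' _ _ ENNReal.ofReal_ne_top]
        exact setLIntegral_congr_fun measurableSet_Ioo fun l _ =>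
          (ENNReal.ofReal_mul (by positivity)).symm
    _ ≤ ∫⁻ l in Ioo t π, ENNReal.ofReal (l ^ (-α) * h l) :=
        setLIntegral_mono' measurableSet_Ioo fun l hl => ENNReal.ofReal_le_ofReal <|
          mul_le_mul_of_nonneg_right (two_pi_rpow_mul_rpow_min_le_rpow_neg hn hl.1 hl.2)
            (hnonneg l hl)
    _ ≤ ∫⁻ l in Ioo 0 π, ENNReal.ofReal (l ^ (-α) * h l) :=
        lintegral_mono_set (Ioo_subset_Ioo_left ht)

end MemPn

/-- **Lemma C.1, power-law case.** For `κ > 0`, `α < 1 - κ` and `f(λ) = λ^{-α}` on `(0,π)`,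
there is `C = C(α,κ) > 0` with
`sup_{h ∈ P_n} ( ∫ λ^{-α-κ} h / ∫ λ^{-α} h ) ≤ C n^{κ/(1-α₊)}` for all `n`. -/
theorem sup_density_quotient_power_law (κ α : ℝ) (hκ : 0 < κ) (hα : α < 1 - κ) :
    ∃ C : ℝ, 0 < C ∧ ∀ n : ℕ, ∀ h ∈ {h : ℝ → ℝ | MemPn n h},
      (∫⁻ l in Set.Ioo (0 : ℝ) π, ENNReal.ofReal (l ^ (-α - κ) * h l)) /
          (∫⁻ l in Set.Ioo (0 : ℝ) π, ENNReal.ofReal (l ^ (-α) * h l)) ≤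
        ENNReal.ofReal (C * (n : ℝ) ^ (κ / (1 - max α 0))) := by
  set a : ℝ := (2 * π) ^ (-|α|)
  have ha : 0 < a := by positivity
  have hακ : 0 < 1 - α - κ := by linarith
  refine ⟨2 / (a * (1 - α - κ)) + 1, by positivity, fun n h hh => ?_⟩
  set D := ∫⁻ l in Ioo (0 : ℝ) π, ENNReal.ofReal (l ^ (-α) * h l)
  set r := κ / (1 - max α 0)
  have hn : (1 : ℝ) ≤ n := Nat.one_le_cast.2 hh.pos
  have hβ : 0 < 1 - max α 0 := sub_pos.2 (max_lt (by linarith) one_pos)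
  set δ : ℝ := (n : ℝ) ^ (-(1 - max α 0)⁻¹)
  have hδ : 0 < δ := by positivity
  have hδπ : δ ≤ π := (rpow_le_one_of_one_le_of_nonpos hn (by simp [hβ.le])).trans
    (by linarith [pi_gt_three])
  have hδκ : δ ^ (-κ) = n ^ r := by rw [← rpow_mul (by positivity)]; congr 1; ring
  have hN := lintegral_rpow_sub_mul_le (α := α) hκ.le (by linarith) hδ hδπ hh.1
  rw [mul_rpow_neg_inv_rpow (by positivity) (by linarith), hδκ] at hN
  refine ENNReal.div_le_of_le_mul (hN.trans ?_)
  calc ENNReal.ofReal (n ^ r * n ^ min α 0 / (1 - α - κ)) + ENNReal.ofReal (n ^ r) * D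
      = ENNReal.ofReal (2 / (a * (1 - α - κ)) * n ^ r) * ENNReal.ofReal (a * n ^ min α 0 / 2) +
          ENNReal.ofReal (n ^ r) * D := by
        rw [← ENNReal.ofReal_mul (by positivity)]
        congr 2
        field_simp [ha.ne']
    _ ≤ ENNReal.ofReal (2 / (a * (1 - α - κ)) * n ^ r) * D + ENNReal.ofReal (n ^ r) * D := by
        gcongr
        exact hh.le_lintegral_rpow_mul α
    _ = ENNReal.ofReal ((2 / (a * (1 - α - κ)) + 1) * n ^ r) * D := by
        rw [← add_mul, ← ENNReal.ofReal_add (by positivity) (by positivity), add_mul, one_mul]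

end
end

section
/- Counterexample to the Taqqu (1987) / Dahlhaus (1989, Lemma 5.3) operator-norm bound: for n ∈ ℕ let h_n(λ) = n·1_{(0, n^{−2})}(λ) + n·1_{(1 − 1/n + 1/n², 1)}(λ), a probability density on (0,1) bounded by n. Then the quotient Q_n = ∫_0^1 λ^{−2/3} h_n(λ) dλ / ∫_0^1 λ^{−1/2} h_n(λ) dλ is of exact order n^{1/3}: there exist constants 0 < c < C < ∞ and N ∈ ℕ such that c n^{1/3} ≤ Q_n ≤ C n^{1/3} for all n ≥ N. In particular, Q_n / n^{2/3 − 1/2} = Q_n / n^{1/6} → ∞, so the claimed bound of order n^{β̄−ᾱ} with β̄ = 2/3, ᾱ = 1/2 fails, while n^{1/3} = n^{(β̄−ᾱ)/(1−ᾱ)}. -/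
open MeasureTheory Real Filter Topology

noncomputable section

/-- The density `h_n(λ) = n 1_{(0, n^{-2})}(λ) + n 1_{(1 - 1/n + 1/n², 1)}(λ)`. -/
def hCounter (n : ℕ) (l : ℝ) : ℝ :=
  (n : ℝ) * Set.indicator (Set.Ioo (0 : ℝ) ((n : ℝ) ^ (-2 : ℝ))) (fun _ => 1) l +
    (n : ℝ) * Set.indicator (Set.Ioo (1 - 1 / (n : ℝ) + 1 / (n : ℝ) ^ 2) 1) (fun _ => 1) l

/-- The quotient `Q_n = ∫_0^1 λ^{-2/3} h_n / ∫_0^1 λ^{-1/2} h_n`. -/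
def Qcounter (n : ℕ) : ℝ :=
  (∫ l in Set.Ioo (0 : ℝ) 1, l ^ (-(2 : ℝ) / 3) * hCounter n l) /
    (∫ l in Set.Ioo (0 : ℝ) 1, l ^ (-(1 : ℝ) / 2) * hCounter n l)

lemma rpow_intOn {p : ℝ} (hp : -1 < p) (c d : ℝ) :
    IntegrableOn (fun x : ℝ => x ^ p) (Set.Ioo c d) := by
  rcases le_or_gt c d with h | h
  · exact ((intervalIntegrable_iff_integrableOn_Ioc_of_le h).mp
      (intervalIntegral.intervalIntegrable_rpow' hp)).mono_set Set.Ioo_subset_Ioc_self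
  · simp [Set.Ioo_eq_empty (not_lt.mpr h.le)]

lemma rpow_ioo {p : ℝ} (hp : -1 < p) {c d : ℝ} (h : c ≤ d) :
    ∫ x in Set.Ioo c d, x ^ p = (d ^ (p+1) - c ^ (p+1)) / (p+1) := by
  rw [← MeasureTheory.integral_Ioc_eq_integral_Ioo, ← intervalIntegral.integral_of_le h,
    integral_rpow (Or.inl hp)]

lemma integ_key (n : ℕ) (hn : 2 ≤ n) (p : ℝ) (hp : -1 < p) :
    ∫ l in Set.Ioo (0:ℝ) 1, l ^ p * hCounter n l
      = (n:ℝ) * ((n:ℝ) ^ (-2:ℝ)) ^ (p+1) / (p+1)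
        + (n:ℝ) * (1 - (1 - 1/(n:ℝ) + 1/(n:ℝ)^2) ^ (p+1)) / (p+1) := by
  have hn2 : (2:ℝ) ≤ (n:ℝ) := by exact_mod_cast hn
  have hn0 : (0:ℝ) < n := by linarith
  set b : ℝ := (n:ℝ) ^ (-2:ℝ) with hb
  set a : ℝ := 1 - 1/(n:ℝ) + 1/(n:ℝ)^2 with ha
  have hbval : b = ((n:ℝ)^2)⁻¹ := by
    rw [hb, Real.rpow_neg hn0.le, show (2:ℝ) = ((2:ℕ):ℝ) by norm_num, Real.rpow_natCast]
  have hb0 : 0 < b := by rw [hbval]; positivity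
  have hb1 : b ≤ 1 := by
    rw [hbval]
    rw [inv_le_one_iff₀]
    right; nlinarith
  have hu : (0:ℝ) < 1/(n:ℝ) := by positivity
  have hu2 : (1:ℝ)/(n:ℝ) ≤ 1/2 := by
    apply div_le_div_of_nonneg_left (by norm_num) (by norm_num) hn2
  have hsq : (1:ℝ)/(n:ℝ)^2 = (1/(n:ℝ))^2 := by rw [div_pow]; norm_num
  have ha0 : 0 < a := by rw [ha, hsq]; nlinarith
  have ha1 : a < 1 := by rw [ha, hsq]; nlinarith
  have hfun : ∀ l, l ^ p * hCounter n l
      = (n:ℝ) * (Set.Ioo (0:ℝ) b).indicator (fun x => x ^ p) l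
        + (n:ℝ) * (Set.Ioo a 1).indicator (fun x => x ^ p) l := by
    intro l
    unfold hCounter
    rw [← hb, ← ha]
    by_cases h1 : l ∈ Set.Ioo (0:ℝ) b <;> by_cases h2 : l ∈ Set.Ioo a 1 <;>
      simp only [Set.indicator_apply, h1, h2, if_true, if_false, ite_true, ite_false] <;> ring
  simp_rw [hfun]
  have hI1 : IntegrableOn
      (fun l => (n:ℝ) * (Set.Ioo (0:ℝ) b).indicator (fun x => x ^ p) l) (Set.Ioo (0:ℝ) 1) :=
    (((rpow_intOn hp 0 b).integrable_indicator measurableSet_Ioo).const_mul _).integrableOn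
  have hI2 : IntegrableOn
      (fun l => (n:ℝ) * (Set.Ioo a 1).indicator (fun x => x ^ p) l) (Set.Ioo (0:ℝ) 1) :=
    (((rpow_intOn hp a 1).integrable_indicator measurableSet_Ioo).const_mul _).integrableOn
  rw [MeasureTheory.integral_add hI1 hI2, MeasureTheory.integral_const_mul,
    MeasureTheory.integral_const_mul, MeasureTheory.setIntegral_indicator measurableSet_Ioo,
    MeasureTheory.setIntegral_indicator measurableSet_Ioo]
  have e1 : Set.Ioo (0:ℝ) 1 ∩ Set.Ioo (0:ℝ) b = Set.Ioo (0:ℝ) b :=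
    Set.inter_eq_self_of_subset_right (Set.Ioo_subset_Ioo_right hb1)
  have e2 : Set.Ioo (0:ℝ) 1 ∩ Set.Ioo a 1 = Set.Ioo a 1 :=
    Set.inter_eq_self_of_subset_right (Set.Ioo_subset_Ioo_left ha0.le)
  rw [e1, e2, rpow_ioo hp hb0.le, rpow_ioo hp ha1.le,
    Real.zero_rpow (by linarith : p + 1 ≠ 0), Real.one_rpow]
  ring

set_option maxHeartbeats 1000000 in
lemma Qbound (n : ℕ) (hn : 2 ≤ n) :
    (1/2) * (n:ℝ) ^ ((1:ℝ)/3) ≤ Qcounter n ∧ Qcounter n ≤ 3 * (n:ℝ) ^ ((1:ℝ)/3) := by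
  have hn2 : (2:ℝ) ≤ (n:ℝ) := by exact_mod_cast hn
  have hn0 : (0:ℝ) < n := by linarith
  set a : ℝ := 1 - 1/(n:ℝ) + 1/(n:ℝ)^2 with ha
  clear_value a
  have hu : (0:ℝ) < 1/(n:ℝ) := by positivity
  have hu2 : (1:ℝ)/(n:ℝ) ≤ 1/2 := by
    apply div_le_div_of_nonneg_left (by norm_num) (by norm_num) hn2
  have hsq : (1:ℝ)/(n:ℝ)^2 = (1/(n:ℝ))^2 := by rw [div_pow]; norm_num
  have ha0 : 0 < a := by rw [ha, hsq]; nlinarith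
  have ha1 : a < 1 := by rw [ha, hsq]; nlinarith
  have hna : (n:ℝ) * (1 - a) = 1 - 1/(n:ℝ) := by
    rw [ha]; field_simp; ring
  set E : ℝ := (n:ℝ) * (1 - a ^ ((1:ℝ)/3)) with hE
  set s : ℝ := a ^ ((1:ℝ)/2) with hs
  have hNum : ∫ l in Set.Ioo (0:ℝ) 1, l ^ (-(2:ℝ)/3) * hCounter n l
      = 3 * (n:ℝ) ^ ((1:ℝ)/3) + 3 * E := by
    rw [integ_key n hn _ (by norm_num : (-1:ℝ) < -(2:ℝ)/3)]
    rw [show (-(2:ℝ)/3 + 1) = 1/3 by norm_num]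
    rw [show ((n:ℝ)^(-2:ℝ))^((1:ℝ)/3) = (n:ℝ)^(-(2:ℝ)/3) by
      rw [← Real.rpow_mul hn0.le]; norm_num]
    have h3 : (n:ℝ) * (n:ℝ)^(-(2:ℝ)/3) = (n:ℝ)^((1:ℝ)/3) := by
      have h := Real.rpow_add hn0 (1:ℝ) (-(2:ℝ)/3)
      rw [Real.rpow_one] at h
      rw [← h]; norm_num
    rw [h3, ← ha, hE]
    ring
  have hDen : ∫ l in Set.Ioo (0:ℝ) 1, l ^ (-(1:ℝ)/2) * hCounter n l
      = 2 + 2 * ((n:ℝ) * (1 - s)) := by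
    rw [integ_key n hn _ (by norm_num : (-1:ℝ) < -(1:ℝ)/2)]
    rw [show (-(1:ℝ)/2 + 1) = 1/2 by norm_num]
    rw [show ((n:ℝ)^(-2:ℝ))^((1:ℝ)/2) = (n:ℝ)^(-1:ℝ) by
      rw [← Real.rpow_mul hn0.le]; norm_num]
    have h3 : (n:ℝ) * (n:ℝ)^(-1:ℝ) = 1 := by
      have h := Real.rpow_add hn0 (1:ℝ) (-1:ℝ)
      rw [Real.rpow_one] at h
      rw [← h]; norm_num
    rw [h3, ← ha, ← hs]
    ring
  -- facts about E
  have hcube : a ≤ a ^ ((1:ℝ)/3) := by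
    calc a = a ^ (1:ℝ) := (Real.rpow_one a).symm
    _ ≤ a ^ ((1:ℝ)/3) := Real.rpow_le_rpow_of_exponent_ge ha0 ha1.le (by norm_num)
  have hcube1 : a ^ ((1:ℝ)/3) ≤ 1 := Real.rpow_le_one ha0.le ha1.le (by norm_num)
  have hE0 : 0 ≤ E := by
    rw [hE]; apply mul_nonneg hn0.le; linarith
  have hE1 : E ≤ 1 := by
    rw [hE]
    calc (n:ℝ) * (1 - a ^ ((1:ℝ)/3)) ≤ (n:ℝ) * (1 - a) := by
          apply mul_le_mul_of_nonneg_left (by linarith) hn0.le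
    _ = 1 - 1/(n:ℝ) := hna
    _ ≤ 1 := by linarith
  -- facts about s
  have hs0 : 0 ≤ s := Real.rpow_nonneg ha0.le _
  have hs1 : s ≤ 1 := Real.rpow_le_one ha0.le ha1.le (by norm_num)
  have hss : s * s = a := by
    rw [hs, ← Real.rpow_add ha0]; norm_num
  have hsa : a ≤ s := by
    calc a = a ^ (1:ℝ) := (Real.rpow_one a).symm
    _ ≤ a ^ ((1:ℝ)/2) := Real.rpow_le_rpow_of_exponent_ge ha0 ha1.le (by norm_num)
  clear_value s
  have hs_low : (1 - a)/2 ≤ 1 - s := by nlinarith [sq_nonneg (1 - s), hss]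
  have hF_low : 1/4 ≤ (n:ℝ) * (1 - s) := by
    calc (1:ℝ)/4 ≤ (1 - 1/(n:ℝ))/2 := by linarith
    _ = ((n:ℝ) * (1 - a))/2 := by rw [hna]
    _ = (n:ℝ) * ((1-a)/2) := by ring
    _ ≤ (n:ℝ) * (1 - s) := mul_le_mul_of_nonneg_left hs_low hn0.le
  have hF_hi : (n:ℝ) * (1 - s) ≤ 1 := by
    calc (n:ℝ) * (1 - s) ≤ (n:ℝ) * (1 - a) := by
          apply mul_le_mul_of_nonneg_left (by linarith) hn0.le
    _ = 1 - 1/(n:ℝ) := hna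
    _ ≤ 1 := by linarith
  have hD_lo : (5:ℝ)/2 ≤ 2 + 2 * ((n:ℝ) * (1 - s)) := by linarith
  have hD_hi : 2 + 2 * ((n:ℝ) * (1 - s)) ≤ 4 := by linarith
  have hDpos : (0:ℝ) < 2 + 2 * ((n:ℝ) * (1 - s)) := by linarith
  have ht : (1:ℝ) ≤ (n:ℝ) ^ ((1:ℝ)/3) := by
    calc (1:ℝ) = (1:ℝ) ^ ((1:ℝ)/3) := (Real.one_rpow _).symm
    _ ≤ (n:ℝ) ^ ((1:ℝ)/3) := Real.rpow_le_rpow (by norm_num) (by linarith) (by norm_num)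
  set t : ℝ := (n:ℝ) ^ ((1:ℝ)/3) with htd
  set D : ℝ := 2 + 2 * ((n:ℝ) * (1 - s)) with hDd
  unfold Qcounter
  rw [hNum, hDen]
  constructor
  · rw [le_div_iff₀ hDpos]
    nlinarith [mul_nonneg (show (0:ℝ) ≤ t by linarith) (show (0:ℝ) ≤ 4 - D by linarith)]
  · rw [div_le_iff₀ hDpos]
    nlinarith [mul_nonneg (show (0:ℝ) ≤ 3*t by linarith) (show (0:ℝ) ≤ D - 5/2 by linarith)]

/-- **Counterexample to the Taqqu/Dahlhaus operator-norm bound.** `Q_n` is of exact order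
`n^{1/3}`, so `Q_n / n^{1/6} → ∞`: the claimed bound of order `n^{β̄-ᾱ}` with `β̄ = 2/3`,
`ᾱ = 1/2` fails, while `n^{1/3} = n^{(β̄-ᾱ)/(1-ᾱ)}`. -/
theorem counterexample_dahlhaus :
    (∃ c C : ℝ, 0 < c ∧ c < C ∧ ∃ N : ℕ, ∀ n ≥ N,
        c * (n : ℝ) ^ ((1 : ℝ) / 3) ≤ Qcounter n ∧
          Qcounter n ≤ C * (n : ℝ) ^ ((1 : ℝ) / 3)) ∧
      Tendsto (fun n : ℕ => Qcounter n / (n : ℝ) ^ ((1 : ℝ) / 6)) atTop atTop := by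
  constructor
  · exact ⟨1/2, 3, by norm_num, by norm_num, 2, fun n hn => Qbound n hn⟩
  · refine tendsto_atTop_mono' atTop ?_
      (Tendsto.const_mul_atTop (by norm_num : (0:ℝ) < 1/2)
        ((tendsto_rpow_atTop (by norm_num : (0:ℝ) < 1/6)).comp tendsto_natCast_atTop_atTop))
    filter_upwards [eventually_ge_atTop 2] with n hn
    have hn0 : (0:ℝ) < n := by
      have : (2:ℝ) ≤ n := by exact_mod_cast hn
      linarith
    have h6 : (0:ℝ) < (n:ℝ) ^ ((1:ℝ)/6) := Real.rpow_pos_of_pos hn0 _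
    rw [le_div_iff₀ h6]
    calc (1/2 : ℝ) * (n:ℝ) ^ ((1:ℝ)/6) * (n:ℝ) ^ ((1:ℝ)/6)
        = (1/2) * (n:ℝ) ^ ((1:ℝ)/3) := by
          rw [mul_assoc, ← Real.rpow_add hn0]; norm_num
    _ ≤ Qcounter n := (Qbound n hn).1


end
end

section
/- Fisher information limit for mildly integrated AR(1): let c > 0 and let (a_n) be a sequence of positive reals with a_n → 0 and n a_n → ∞ (so that c a_n < 1 for large n). Then (1/(4π)) ∫_{-π}^{π} 4 a_n (1 − c a_n − cos λ)² / ( 2(1 − c a_n)(1 − cos λ) + c² a_n² )² dλ → 1/(2c) as n → ∞. -/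
/-!
With `φ = 1 - c a`, the integrand is `a (2(φ - cos λ)/D)²` where `D = 1 - 2φ cos λ + φ²`, and
the integral has the closed form `∫_{-π}^{π} (2(φ - cos λ)/D)² dλ = 4π/(1 - φ²)`, so the
normalized Fisher information equals `1/(c(2 - c a_n))` as soon as `c a_n < 1`.
The closed form comes from `2(φ - cos λ)/D = (1 - P)/φ` with the Poisson kernel
`P = (1 - φ²)/D`, which yields an explicit primitive built from `arctan (((1+φ)/(1-φ)) tan (λ/2))`.
-/

open MeasureTheory Real Filter Topology Set

noncomputable section

def arDenom (φ l : ℝ) : ℝ := 1 - 2 * φ * cos l + φ ^ 2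

lemma arDenom_pos {φ : ℝ} (hφ : |φ| < 1) (l : ℝ) : 0 < arDenom φ l := by
  have hcos : |φ * cos l| ≤ |φ| := by
    rw [abs_mul]; exact mul_le_of_le_one_right (abs_nonneg φ) (abs_cos_le_one l)
  have hsq : |φ| ^ 2 = φ ^ 2 := sq_abs φ
  unfold arDenom
  nlinarith [le_abs_self (φ * cos l), abs_nonneg φ]

lemma hasDerivAt_arDenom (φ l : ℝ) : HasDerivAt (arDenom φ) (2 * φ * sin l) l := by
  have := (((hasDerivAt_cos l).const_mul (2 * φ)).const_sub 1).add_const (φ ^ 2)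
  exact this.congr_deriv (by ring)

lemma hasDerivAt_arctan_mul_tan_half (k : ℝ) {x : ℝ} (hx : x ∈ Ioo (-π) π) :
    HasDerivAt (fun y => arctan (k * tan (y / 2))) (k / (1 + cos x + k ^ 2 * (1 - cos x))) x := by
  have hcos : 0 < cos (x / 2) := cos_pos_of_mem_Ioo ⟨by linarith [hx.1], by linarith [hx.2]⟩
  have hhalf : HasDerivAt (fun y : ℝ => y / 2) (1 / 2) x := (hasDerivAt_id' x).div_const 2
  have htan := ((hasDerivAt_tan hcos.ne').comp x hhalf).const_mul k
  refine htan.arctan.congr_deriv ?_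
  have hden : 1 + cos x + k ^ 2 * (1 - cos x) = 2 * (cos (x / 2) ^ 2 + k ^ 2 * sin (x / 2) ^ 2) := by
    have h1 := cos_sq (x / 2)
    have h2 := sin_sq_add_cos_sq (x / 2)
    rw [show 2 * (x / 2) = x by ring] at h1
    linear_combination (2 * k ^ 2 - 2) * h1 - 2 * k ^ 2 * h2
  have hpos : 0 < cos (x / 2) ^ 2 + k ^ 2 * sin (x / 2) ^ 2 := by positivity
  rw [Function.comp_apply, tan_eq_sin_div_cos, hden]
  field_simp

/-- Jumps at `±π`, so the integral over `(-π, π)` is read off its one-sided limits there. -/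
def arScoreSqPrimitive (φ l : ℝ) : ℝ :=
  (l + 2 * (3 * φ ^ 2 - 1) / (1 - φ ^ 2) * arctan ((1 + φ) / (1 - φ) * tan (l / 2)) +
    2 * φ * sin l / arDenom φ l) / φ ^ 2

lemma hasDerivAt_arScoreSqPrimitive {φ : ℝ} (hφ0 : φ ≠ 0) (hφ : |φ| < 1) {l : ℝ}
    (hl : l ∈ Ioo (-π) π) :
    HasDerivAt (arScoreSqPrimitive φ) (4 * (φ - cos l) ^ 2 / arDenom φ l ^ 2) l := by
  obtain ⟨hφl, hφu⟩ := abs_lt.mp hφ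
  have hD := arDenom_pos hφ l
  have hA : (1 + φ) / (1 - φ) / (1 + cos l + ((1 + φ) / (1 - φ)) ^ 2 * (1 - cos l)) =
      (1 - φ ^ 2) / (2 * arDenom φ l) := by
    have h1 : 1 - φ ≠ 0 := by linarith
    have hk : 1 + cos l + ((1 + φ) / (1 - φ)) ^ 2 * (1 - cos l) = 2 * arDenom φ l / (1 - φ) ^ 2 := by
      rw [arDenom]; field_simp; ring
    rw [hk]
    field_simp
    ring
  have hsum := ((hasDerivAt_id' l).add
    ((hasDerivAt_arctan_mul_tan_half ((1 + φ) / (1 - φ)) hl).const_mul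
      (2 * (3 * φ ^ 2 - 1) / (1 - φ ^ 2)))).add
    (((hasDerivAt_sin l).const_mul (2 * φ)).div (hasDerivAt_arDenom φ l) hD.ne')
  refine (hsum.div_const (φ ^ 2)).congr_deriv ?_
  rw [hA]
  have h2 : 1 - φ ^ 2 ≠ 0 := by nlinarith
  have hsin := sin_sq_add_cos_sq l
  rw [arDenom] at hD ⊢
  field_simp
  linear_combination (-4 * φ ^ 2) * hsin

lemma tendsto_arctan_mul_tan_half_left {k : ℝ} (hk : 0 < k) :
    Tendsto (fun x => arctan (k * tan (x / 2))) (𝓝[<] π) (𝓝 (π / 2)) := by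
  have hhalf : Tendsto (fun x : ℝ => x / 2) (𝓝[<] π) (𝓝[<] (π / 2)) :=
    ((continuous_id.div_const 2).continuousWithinAt).tendsto_nhdsWithin
      fun x (hx : x < π) => show x / 2 < π / 2 by linarith
  exact (tendsto_arctan_atTop.mono_right nhdsWithin_le_nhds).comp
    ((tendsto_tan_pi_div_two.comp hhalf).const_mul_atTop hk)

lemma tendsto_arctan_mul_tan_half_right {k : ℝ} (hk : 0 < k) :
    Tendsto (fun x => arctan (k * tan (x / 2))) (𝓝[>] (-π)) (𝓝 (-(π / 2))) := by
  have hhalf : Tendsto (fun x : ℝ => x / 2) (𝓝[>] (-π)) (𝓝[>] (-π / 2)) :=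
    ((continuous_id.div_const 2).continuousWithinAt).tendsto_nhdsWithin
      fun x (hx : -π < x) => show -π / 2 < x / 2 by linarith
  rw [neg_div] at hhalf
  exact (tendsto_arctan_atBot.mono_right nhdsWithin_le_nhds).comp
    ((tendsto_tan_neg_pi_div_two.comp hhalf).const_mul_atBot hk)

lemma tendsto_arScoreSqPrimitive {φ : ℝ} (hφ : |φ| < 1) {s : Set ℝ} {x₀ A : ℝ}
    (harctan : Tendsto (fun x => arctan ((1 + φ) / (1 - φ) * tan (x / 2))) (𝓝[s] x₀) (𝓝 A))
    (hsin : sin x₀ = 0) :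
    Tendsto (arScoreSqPrimitive φ) (𝓝[s] x₀)
      (𝓝 ((x₀ + 2 * (3 * φ ^ 2 - 1) / (1 - φ ^ 2) * A) / φ ^ 2)) := by
  have hrat : Continuous fun x => 2 * φ * sin x / arDenom φ x := by
    have := arDenom_pos hφ
    unfold arDenom at *
    fun_prop (disch := exact fun x => (this x).ne')
  have hlim := ((tendsto_nhdsWithin_of_tendsto_nhds tendsto_id).add
    (harctan.const_mul (2 * (3 * φ ^ 2 - 1) / (1 - φ ^ 2)))).add
    (hrat.continuousWithinAt (s := s) (x := x₀)).tendsto |>.div_const (φ ^ 2)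
  rwa [hsin, mul_zero, zero_div, add_zero] at hlim

theorem integral_arScoreSq {φ : ℝ} (hφ0 : φ ≠ 0) (hφ : |φ| < 1) :
    ∫ l in Ioo (-π) π, 4 * (φ - cos l) ^ 2 / arDenom φ l ^ 2 = 4 * π / (1 - φ ^ 2) := by
  obtain ⟨hφl, hφu⟩ := abs_lt.mp hφ
  have hk : 0 < (1 + φ) / (1 - φ) := div_pos (by linarith) (by linarith)
  have hcont : Continuous fun l => 4 * (φ - cos l) ^ 2 / arDenom φ l ^ 2 := by
    have := arDenom_pos hφ
    unfold arDenom at *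
    fun_prop (disch := exact fun x => (pow_pos (this x) 2).ne')
  rw [← integral_Ioc_eq_integral_Ioo, ← intervalIntegral.integral_of_le (neg_le_self pi_pos.le),
    intervalIntegral.integral_eq_sub_of_hasDerivAt_of_tendsto (neg_lt_self pi_pos)
      (fun l hl => hasDerivAt_arScoreSqPrimitive hφ0 hφ hl) (hcont.intervalIntegrable _ _)
      (tendsto_arScoreSqPrimitive hφ (tendsto_arctan_mul_tan_half_right hk) (by simp))
      (tendsto_arScoreSqPrimitive hφ (tendsto_arctan_mul_tan_half_left hk) sin_pi)]
  have h2 : 1 - φ ^ 2 ≠ 0 := by nlinarith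
  field_simp
  ring

lemma ar1_fisherInfo_eq {c a : ℝ} (hc : 0 < c) (ha : 0 < a) (hca : c * a < 1) :
    (1 / (4 * π)) * ∫ l in Ioo (-π) π,
        4 * a * (1 - c * a - cos l) ^ 2 / (2 * (1 - c * a) * (1 - cos l) + c ^ 2 * a ^ 2) ^ 2 =
      1 / (c * (2 - c * a)) := by
  have hca0 : 0 < c * a := mul_pos hc ha
  have hφ : |1 - c * a| < 1 := abs_lt.mpr ⟨by linarith, by linarith⟩
  have hintegrand : (fun l => 4 * a * (1 - c * a - cos l) ^ 2 /
      (2 * (1 - c * a) * (1 - cos l) + c ^ 2 * a ^ 2) ^ 2) =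
      fun l => a * (4 * (1 - c * a - cos l) ^ 2 / arDenom (1 - c * a) l ^ 2) := by
    funext l
    rw [arDenom]
    ring
  rw [hintegrand, integral_const_mul, integral_arScoreSq (by linarith) hφ]
  rw [show 1 - (1 - c * a) ^ 2 = c * a * (2 - c * a) by ring]
  have h2 : 2 - c * a ≠ 0 := by linarith
  field_simp

theorem ar1_fisher_information_limit_general (c : ℝ) (hc : 0 < c) (a : ℕ → ℝ)
    (ha_pos : ∀ n, 0 < a n) (ha0 : Tendsto a atTop (𝓝 0)) :
    Tendsto (fun n : ℕ =>
        (1 / (4 * π)) * ∫ l in Set.Ioo (-π) π,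
          4 * a n * (1 - c * a n - Real.cos l) ^ 2 /
            (2 * (1 - c * a n) * (1 - Real.cos l) + c ^ 2 * (a n) ^ 2) ^ 2)
      atTop (𝓝 (1 / (2 * c))) := by
  have hca : Tendsto (fun n => c * a n) atTop (𝓝 0) := by simpa using ha0.const_mul c
  have hval := (hca.eventually_lt_const one_pos).mono fun n hn =>
    (ar1_fisherInfo_eq hc (ha_pos n) hn).symm
  have hlim : Tendsto (fun n => 1 / (c * (2 - c * a n))) atTop (𝓝 (1 / (c * (2 - 0)))) :=
    tendsto_const_nhds.div ((tendsto_const_nhds.sub hca).const_mul c) (by positivity)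
  rw [sub_zero, mul_comm] at hlim
  exact hlim.congr' hval

/-- **Fisher information limit for the mildly integrated AR(1) model.** If `c > 0`,
`a_n > 0`, `a_n → 0` and `n a_n → ∞`, then
`(1/(4π)) ∫_{-π}^{π} 4 a_n (1-ca_n-cos λ)² / (2(1-ca_n)(1-cos λ)+c²a_n²)² dλ → 1/(2c)`. -/
theorem ar1_fisher_information_limit (c : ℝ) (hc : 0 < c) (a : ℕ → ℝ)
    (ha_pos : ∀ n, 0 < a n) (ha0 : Tendsto a atTop (𝓝 0))
    (hna : Tendsto (fun n : ℕ => (n : ℝ) * a n) atTop atTop) :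
    Tendsto (fun n : ℕ =>
        (1 / (4 * π)) * ∫ l in Set.Ioo (-π) π,
          4 * a n * (1 - c * a n - Real.cos l) ^ 2 /
            (2 * (1 - c * a n) * (1 - Real.cos l) + c ^ 2 * (a n) ^ 2) ^ 2)
      atTop (𝓝 (1 / (2 * c))) :=
  ar1_fisher_information_limit_general c hc a ha_pos ha0

end
end
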